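/- Under the Hard-Concrete relaxation with u ~ Uniform(0,1), the probability that z̃ > 0 (the gate is not fully closed) equals σ(log α − β·log(−γ/ζ)). -/

import Mathlib

/-!
The clamp `max 0 (min 1 ·)` leaves the sign of `σ(s)(ζ - γ) + γ` unchanged, and since `σ` is
increasing with `σ(log(a/b)) = a/(a+b)`, this quantity is positive exactly when
`s > log(-γ/ζ)`. Unfolding `s`, the gate is open iff `logit u > β log(-γ/ζ) - log α`, i.e. iff
`u > σ(β log(-γ/ζ) - log α)`; the uniform measure of that interval is
`1 - σ(β log(-γ/ζ) - log α) = σ(log α - β log(-γ/ζ))`.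
-/

open MeasureTheory Real Set

namespace Real

lemma sigmoid_log_div {a b : ℝ} (ha : 0 < a) (hb : 0 < b) :
    sigmoid (log (a / b)) = a / (a + b) := by
  rw [sigmoid_def, ← log_inv, inv_div, exp_log (div_pos hb ha)]
  field_simp

lemma lt_log_sub_log_one_sub_iff {t u : ℝ} (hu₀ : 0 < u) (hu₁ : u < 1) :
    t < log u - log (1 - u) ↔ sigmoid t < u := by
  have h1u : 0 < 1 - u := sub_pos.mpr hu₁
  rw [← log_div hu₀.ne' h1u.ne', ← sigmoid_lt_iff, sigmoid_log_div hu₀ h1u, add_sub_cancel,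
    div_one]

lemma log_neg_div_lt_iff {γ ζ : ℝ} (hγ : γ < 0) (hζ : 0 < ζ) (s : ℝ) :
    log (-γ / ζ) < s ↔ 0 < sigmoid s * (ζ - γ) + γ := by
  rw [← sigmoid_lt_iff, sigmoid_log_div (neg_pos.mpr hγ) hζ,
    div_lt_iff₀ (by linarith : 0 < -γ + ζ)]
  constructor <;> intro h <;> linarith

end Real

noncomputable def hardConcreteGate (α β γ ζ u : ℝ) : ℝ :=
  max 0 (min 1 (sigmoid ((log α + log u - log (1 - u)) / β) * (ζ - γ) + γ))

lemma hardConcreteGate_pos_iff {α β γ ζ u : ℝ} (hβ : 0 < β) (hγ : γ < 0) (hζ : 0 < ζ)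
    (hu₀ : 0 < u) (hu₁ : u < 1) :
    0 < hardConcreteGate α β γ ζ u ↔ sigmoid (β * log (-γ / ζ) - log α) < u := by
  have hclamp : ∀ x : ℝ, 0 < max 0 (min 1 x) ↔ 0 < x := fun x => by
    simp only [lt_max_iff, lt_min_iff, lt_irrefl, zero_lt_one, true_and, false_or]
  rw [hardConcreteGate, hclamp, ← log_neg_div_lt_iff hγ hζ, lt_div_iff₀ hβ,
    ← lt_log_sub_log_one_sub_iff hu₀ hu₁]
  constructor <;> intro h <;> linarith

lemma setOf_hardConcreteGate_pos {α β γ ζ : ℝ} (hβ : 0 < β) (hγ : γ < 0) (hζ : 0 < ζ) :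
    {u : ℝ | u ∈ Ioo (0 : ℝ) 1 ∧ 0 < hardConcreteGate α β γ ζ u} =
      Ioo (sigmoid (β * log (-γ / ζ) - log α)) 1 := by
  ext u
  constructor
  · rintro ⟨⟨hu₀, hu₁⟩, hopen⟩
    exact ⟨(hardConcreteGate_pos_iff hβ hγ hζ hu₀ hu₁).mp hopen, hu₁⟩
  · rintro ⟨hu, hu₁⟩
    have hu₀ : 0 < u := (sigmoid_pos _).trans hu
    exact ⟨⟨hu₀, hu₁⟩, (hardConcreteGate_pos_iff hβ hγ hζ hu₀ hu₁).mpr hu⟩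

theorem stmt8_general (α β γ ζ : ℝ) (hβ : 0 < β) (hγ : γ < 0) (hζ : 1 < ζ)
    (sig : ℝ → ℝ) (hsig : ∀ x, sig x = (1 + Real.exp (-x))⁻¹)
    (ztilde : ℝ → ℝ)
    (hz : ∀ u, ztilde u =
      max 0 (min 1 (sig ((Real.log α + Real.log u - Real.log (1 - u)) / β) * (ζ - γ) + γ))) :
    volume {u : ℝ | u ∈ Set.Ioo (0:ℝ) 1 ∧ 0 < ztilde u} =
      ENNReal.ofReal (sig (Real.log α - β * Real.log (-γ / ζ))) := by
  obtain rfl : sig = sigmoid := funext hsig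
  obtain rfl : ztilde = hardConcreteGate α β γ ζ := funext hz
  rw [setOf_hardConcreteGate_pos hβ hγ (zero_lt_one.trans hζ), volume_Ioo, ← sigmoid_neg,
    neg_sub]

/-- Under the Hard-Concrete relaxation with `u ~ Uniform(0,1)`, the probability
that the gate is not fully closed, `P[z̃ > 0]`, equals `σ(log α − β·log(−γ/ζ))`. -/
theorem stmt8 (α β γ ζ : ℝ) (hα : 0 < α) (hβ : 0 < β) (hγ : γ < 0) (hζ : 1 < ζ)
    (sig : ℝ → ℝ) (hsig : ∀ x, sig x = (1 + Real.exp (-x))⁻¹)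
    (ztilde : ℝ → ℝ)
    (hz : ∀ u, ztilde u =
      max 0 (min 1 (sig ((Real.log α + Real.log u - Real.log (1 - u)) / β) * (ζ - γ) + γ))) :
    volume {u : ℝ | u ∈ Set.Ioo (0:ℝ) 1 ∧ 0 < ztilde u} =
      ENNReal.ofReal (sig (Real.log α - β * Real.log (-γ / ζ))) :=
  stmt8_general α β γ ζ hβ hγ hζ sig hsig ztilde hz
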